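/- Let R be a left Noetherian ring, M an object of the bounded derived category D^b(R) with M ⊥ M and M ⊥ R, and let Q → M → Σ^{n+1} ΩM → ΣQ be the distinguished triangle of Construction 3.1 with Q a perfect complex and ΩM a finitely generated R-module. Then M ⊥ ΩM, i.e., Hom_{D^b(R)}(M, Σ^i ΩM) = 0 for all integers i with |i| sufficiently large. (First step of the proof of Proposition 3.2.) -/

import Mathlib

open CategoryTheory Limits Pretriangulated

universe w v u

section Triangulated

variable {C : Type v} [Category.{w} C] [Preadditive C] [HasZeroObject C] [HasShift C ℤ]
  [∀ n : ℤ, (shiftFunctor C n).Additive] [Pretriangulated C]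

/-- Two objects `M` and `N` of a triangulated category are *eventually orthogonal*,
written `M ⊥ N`, if `Hom(M, Σ^i N) = 0` for all integers `i` with `|i|` sufficiently large. -/
def EvOrth (M N : C) : Prop :=
  ∃ n : ℕ, ∀ i : ℤ, (n : ℤ) ≤ |i| → ∀ f : M ⟶ N⟦i⟧, f = 0

/-- `X` is a direct summand of `Y` (i.e. `X` is a retract of `Y`). -/
def IsDirectSummand (X Y : C) : Prop :=
  ∃ (s : X ⟶ Y) (r : Y ⟶ X), s ≫ r = 𝟙 X

/-- A class of objects of a triangulated category is *thick* if it is closed under all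
shifts `Σ^i` (`i : ℤ`), satisfies the two-out-of-three property for distinguished
triangles, and is closed under direct summands. -/
def IsThickSet (S : Set C) : Prop :=
  (∀ X ∈ S, ∀ i : ℤ, (X⟦i⟧ : C) ∈ S) ∧
  (∀ T : Triangle C, T ∈ (distTriang C) →
    ((T.obj₁ ∈ S → T.obj₂ ∈ S → T.obj₃ ∈ S) ∧
     (T.obj₂ ∈ S → T.obj₃ ∈ S → T.obj₁ ∈ S) ∧
     (T.obj₁ ∈ S → T.obj₃ ∈ S → T.obj₂ ∈ S))) ∧
  (∀ X Y : C, IsDirectSummand X Y → Y ∈ S → X ∈ S)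

/-- The *thick closure* of a class of objects: the intersection of all thick
subcategories containing it. -/
def thickClosure (A : Set C) : Set C :=
  {X | ∀ S : Set C, IsThickSet S → A ⊆ S → X ∈ S}

/-- A *thick subcategory of the full triangulated subcategory* on a class `Amb` of objects:
a subclass of `Amb` closed under shifts, under two-out-of-three for distinguished triangles
with all three vertices in `Amb`, and under direct summands (within `Amb`). -/
def IsThickSetIn (Amb S : Set C) : Prop :=
  S ⊆ Amb ∧
  (∀ X ∈ S, ∀ i : ℤ, (X⟦i⟧ : C) ∈ S) ∧
  (∀ T : Triangle C, T ∈ (distTriang C) → T.obj₁ ∈ Amb → T.obj₂ ∈ Amb → T.obj₃ ∈ Amb →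
    ((T.obj₁ ∈ S → T.obj₂ ∈ S → T.obj₃ ∈ S) ∧
     (T.obj₂ ∈ S → T.obj₃ ∈ S → T.obj₁ ∈ S) ∧
     (T.obj₁ ∈ S → T.obj₃ ∈ S → T.obj₂ ∈ S))) ∧
  (∀ X Y : C, X ∈ Amb → IsDirectSummand X Y → Y ∈ S → X ∈ S)

/-- The thick closure of a class of objects computed inside the full triangulated
subcategory on the class `Amb`. -/
def thickClosureIn (Amb A : Set C) : Set C :=
  {X | ∀ S : Set C, IsThickSetIn Amb S → A ⊆ S → X ∈ S}

end Triangulated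

section Derived

open DerivedCategory

variable (R : Type u) [Ring R] [HasDerivedCategory.{w} (ModuleCat.{u} R)]

/-- The objects of the bounded derived category `D^b(R-mod)` of finitely generated
`R`-modules, realized inside the derived category of `R`-modules as the complexes whose
homology is bounded and degreewise finitely generated. -/
def Db : Set (DerivedCategory (ModuleCat.{u} R)) :=
  {X | (∀ n : ℤ, Module.Finite R ((homologyFunctor (ModuleCat.{u} R) n).obj X)) ∧
    (∃ a b : ℤ, ∀ n : ℤ, (n < a ∨ b < n) →
      IsZero ((homologyFunctor (ModuleCat.{u} R) n).obj X))}

/-- An `R`-module viewed as a stalk complex concentrated in degree `0`. -/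
noncomputable def stalk (M : ModuleCat.{u} R) : DerivedCategory (ModuleCat.{u} R) :=
  (DerivedCategory.singleFunctor (ModuleCat.{u} R) 0).obj M

/-- The ring `R` viewed as a stalk complex in degree `0`. -/
noncomputable def RObj : DerivedCategory (ModuleCat.{u} R) :=
  stalk R (ModuleCat.of R R)

/-- The perfect complexes: the thick closure of the stalk complex `R`
inside `D^b(R-mod)`. -/
noncomputable def ThickR : Set (DerivedCategory (ModuleCat.{u} R)) :=
  thickClosureIn (Db R) {RObj R}

end Derived

/-!
By the long exact `Hom(M, -)` sequence of a distinguished triangle, eventual orthogonality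
`M ⊥ -` satisfies two-out-of-three, and it passes to shifts and retracts. Hence the objects of
`D^b(R)` that are eventually orthogonal to `M` form a thick subcategory; it contains `R`
because `M ⊥ R`, so it contains every perfect complex `Q`. In the triangle
`Q → M → Σ^{n+1} ΩM → ΣQ` both `Q` and `M` are then eventually orthogonal to `M`, hence so is
`Σ^{n+1} ΩM`, and with it `ΩM`.
-/

section EventuallyOrthogonal

variable {C : Type v} [Category.{w} C] [Preadditive C] [HasShift C ℤ]

lemma EvOrth.of_retract {M N N' : C} (s : N ⟶ N') (r : N' ⟶ N) (hsr : s ≫ r = 𝟙 N)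
    (h : EvOrth M N') : EvOrth M N := by
  obtain ⟨m, hm⟩ := h
  refine ⟨m, fun i hi φ => ?_⟩
  calc φ = (φ ≫ s⟦i⟧') ≫ r⟦i⟧' := by simp [← Functor.map_comp, hsr]
    _ = 0 := by rw [hm i hi (φ ≫ s⟦i⟧'), zero_comp]

lemma EvOrth.of_iso {M N N' : C} (e : N ≅ N') (h : EvOrth M N) : EvOrth M N' :=
  h.of_retract e.inv e.hom e.inv_hom_id

lemma EvOrth.shift {M N : C} (h : EvOrth M N) (k : ℤ) : EvOrth M (N⟦k⟧) := by
  obtain ⟨m, hm⟩ := h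
  refine ⟨m + k.natAbs, fun i hi φ => ?_⟩
  have hki : (m : ℤ) ≤ |k + i| := by
    have := abs_sub_abs_le_abs_sub i (-k)
    simp only [sub_neg_eq_add, abs_neg] at this
    push_cast at hi
    rw [add_comm k i]
    linarith
  let e := (shiftFunctorAdd' C k i (k + i) rfl).app N
  calc φ = (φ ≫ e.inv) ≫ e.hom := by simp
    _ = 0 := by rw [hm _ hki (φ ≫ e.inv), zero_comp]

lemma EvOrth.of_shift {M N : C} (k : ℤ) (h : EvOrth M (N⟦k⟧)) : EvOrth M N :=
  (h.shift (-k)).of_iso ((shiftFunctorCompIsoId C k (-k) (add_neg_cancel k)).app N)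

variable [HasZeroObject C] [∀ n : ℤ, (shiftFunctor C n).Additive] [Pretriangulated C]

lemma EvOrth.obj₂_of_distTriang {M : C} {T : Triangle C} (hT : T ∈ distTriang C)
    (h₁ : EvOrth M T.obj₁) (h₃ : EvOrth M T.obj₃) : EvOrth M T.obj₂ := by
  obtain ⟨m₁, hm₁⟩ := h₁
  obtain ⟨m₃, hm₃⟩ := h₃
  refine ⟨max m₁ m₃, fun i hi φ => ?_⟩
  have hTi := Triangle.shift_distinguished T hT i
  obtain ⟨ψ, rfl⟩ := Triangle.coyoneda_exact₂ _ hTi φ (hm₃ i (by omega) _)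
  have hψ : ψ = 0 := hm₁ i (by omega) ψ
  rw [hψ]
  exact zero_comp

lemma EvOrth.obj₃_of_distTriang {M : C} {T : Triangle C} (hT : T ∈ distTriang C)
    (h₁ : EvOrth M T.obj₁) (h₂ : EvOrth M T.obj₂) : EvOrth M T.obj₃ :=
  obj₂_of_distTriang (rot_of_distTriang T hT) h₂ (h₁.shift 1)

lemma EvOrth.obj₁_of_distTriang {M : C} {T : Triangle C} (hT : T ∈ distTriang C)
    (h₂ : EvOrth M T.obj₂) (h₃ : EvOrth M T.obj₃) : EvOrth M T.obj₁ :=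
  obj₂_of_distTriang (inv_rot_of_distTriang T hT) (h₃.shift (-1)) h₂

lemma isThickSetIn_evOrth {Amb : Set C} (hAmb : ∀ X ∈ Amb, ∀ i : ℤ, (X⟦i⟧ : C) ∈ Amb)
    (M : C) : IsThickSetIn Amb {X | X ∈ Amb ∧ EvOrth M X} := by
  refine ⟨fun X hX => hX.1, fun X hX i => ⟨hAmb X hX.1 i, hX.2.shift i⟩, ?_, ?_⟩
  · intro T hT h₁ h₂ h₃
    exact ⟨fun a b => ⟨h₃, .obj₃_of_distTriang hT a.2 b.2⟩,
      fun a b => ⟨h₁, .obj₁_of_distTriang hT a.2 b.2⟩,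
      fun a b => ⟨h₂, .obj₂_of_distTriang hT a.2 b.2⟩⟩
  · rintro X Y hX ⟨s, r, hsr⟩ hY
    exact ⟨hX, hY.2.of_retract s r hsr⟩

lemma EvOrth.of_mem_thickClosureIn {Amb A : Set C}
    (hAmb : ∀ X ∈ Amb, ∀ i : ℤ, (X⟦i⟧ : C) ∈ Amb) (hA : A ⊆ Amb) {M : C}
    (hMA : ∀ X ∈ A, EvOrth M X) {X : C} (hX : X ∈ thickClosureIn Amb A) : EvOrth M X :=
  (hX _ (isThickSetIn_evOrth hAmb M) fun Y hY => ⟨hA hY, hMA Y hY⟩).2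

end EventuallyOrthogonal

section BoundedDerived

open DerivedCategory

variable {R : Type u} [Ring R] [HasDerivedCategory.{w} (ModuleCat.{u} R)]

lemma shift_mem_Db {X : DerivedCategory (ModuleCat.{u} R)} (hX : X ∈ Db R) (i : ℤ) :
    (X⟦i⟧ : DerivedCategory (ModuleCat.{u} R)) ∈ Db R := by
  obtain ⟨hfin, a, b, hb⟩ := hX
  let e (m : ℤ) : (homologyFunctor (ModuleCat.{u} R) m).obj (X⟦i⟧) ≅
      (homologyFunctor (ModuleCat.{u} R) (i + m)).obj X :=
    ((homologyFunctor (ModuleCat.{u} R) 0).shiftIso i m (i + m) rfl).app X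
  refine ⟨fun m => ?_, a - i, b - i, fun m hm => (hb (i + m) (by omega)).of_iso (e m)⟩
  have := hfin (i + m)
  exact Module.Finite.equiv (e m).symm.toLinearEquiv

lemma stalk_mem_Db (A : ModuleCat.{u} R) [Module.Finite R A] : stalk R A ∈ Db R := by
  let e (m : ℤ) : (homologyFunctor (ModuleCat.{u} R) m).obj (stalk R A) ≅
      ((HomologicalComplex.single (ModuleCat.{u} R) (ComplexShape.up ℤ) 0).obj A).homology m :=
    (homologyFunctorFactors (ModuleCat.{u} R) m).app _
  have hzero (m : ℤ) (hm : m ≠ 0) :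
      IsZero ((homologyFunctor (ModuleCat.{u} R) m).obj (stalk R A)) :=
    (HomologicalComplex.isZero_single_obj_homology _ 0 A m hm).of_iso (e m)
  refine ⟨fun m => ?_, 0, 0, fun m hm => hzero m (by omega)⟩
  by_cases hm : m = 0
  · subst hm
    exact Module.Finite.equiv
      (e 0 ≪≫ HomologicalComplex.singleObjHomologySelfIso _ 0 A).symm.toLinearEquiv
  · have := ModuleCat.subsingleton_of_isZero (hzero m hm)
    infer_instance

lemma RObj_mem_Db : RObj R ∈ Db R :=
  stalk_mem_Db (ModuleCat.of R R)

end BoundedDerived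

open DerivedCategory in
theorem evOrth_syzygy_general (R : Type u) [Ring R]
    [HasDerivedCategory.{w} (ModuleCat.{u} R)]
    (M : DerivedCategory (ModuleCat.{u} R))
    (hMM : EvOrth M M) (hMR : EvOrth M (RObj R))
    (N : ModuleCat.{u} R) (n : ℤ)
    (Q : DerivedCategory (ModuleCat.{u} R)) (hQ : Q ∈ ThickR R)
    (f : Q ⟶ M) (g : M ⟶ (stalk R N)⟦n + 1⟧) (h : (stalk R N)⟦n + 1⟧ ⟶ Q⟦(1 : ℤ)⟧)
    (hT : Triangle.mk f g h ∈ distTriang (DerivedCategory (ModuleCat.{u} R))) :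
    EvOrth M (stalk R N) := by
  have hMQ : EvOrth M Q :=
    EvOrth.of_mem_thickClosureIn (fun _ hX => shift_mem_Db hX)
      (Set.singleton_subset_iff.2 RObj_mem_Db) (by rintro X rfl; exact hMR) hQ
  exact EvOrth.of_shift (n + 1) (EvOrth.obj₃_of_distTriang hT hMQ hMM)

open DerivedCategory in
/-- **(First step of the proof of Proposition 3.2.)** Let `M` be an object of `D^b(R-mod)`
with `M ⊥ M` and `M ⊥ R`, and let `Q ⟶ M ⟶ Σ^{n+1} ΩM ⟶ ΣQ` be a distinguished triangle
as in Construction 3.1, with `Q` a perfect complex and `ΩM` a finitely generated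
`R`-module. Then `M ⊥ ΩM`. -/
theorem evOrth_syzygy (R : Type u) [Ring R] [IsNoetherianRing R]
    [HasDerivedCategory.{w} (ModuleCat.{u} R)]
    (M : DerivedCategory (ModuleCat.{u} R)) (hM : M ∈ Db R)
    (hMM : EvOrth M M) (hMR : EvOrth M (RObj R))
    (N : ModuleCat.{u} R) (hN : Module.Finite R N) (n : ℤ)
    (Q : DerivedCategory (ModuleCat.{u} R)) (hQ : Q ∈ ThickR R)
    (f : Q ⟶ M) (g : M ⟶ (stalk R N)⟦n + 1⟧) (h : (stalk R N)⟦n + 1⟧ ⟶ Q⟦(1 : ℤ)⟧)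
    (hT : Triangle.mk f g h ∈ distTriang (DerivedCategory (ModuleCat.{u} R))) :
    EvOrth M (stalk R N) :=
  evOrth_syzygy_general R M hMM hMR N n Q hQ f g h hT
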